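/- arXiv:math/0509189 — 5 statements merged into one kernel-verified Lean document; each statement's English description precedes it below -/
import Mathlib

section
/- Let k be a field. If A : k((t)) → k((t)) is a continuous k-linear map, then for every i ∈ ℤ there exists j ∈ ℤ such that A(tⁱk[[t]]) ⊆ tʲk[[t]]. -/
open scoped Multiplicative


/-- `tⁱk[[t]]`: the lattice of Laurent series whose coefficients vanish below `i`. -/
def latticeAt (k : Type*) [Field k] (i : ℤ) : Set (LaurentSeries k) :=
  {f | ∀ n : ℤ, n < i → f.coeff n = 0}

private lemma coeff_sum' {k : Type*} [Field k] {ι : Type*} (s : Finset ι)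
    (F : ι → LaurentSeries k) (n : ℤ) :
    (∑ i ∈ s, F i).coeff n = ∑ i ∈ s, (F i).coeff n := by
  classical
  induction s using Finset.cons_induction with
  | empty => simp
  | cons a s ha ih => rw [Finset.sum_cons, Finset.sum_cons, HahnSeries.coeff_add, ih]

/-- A continuous `k`-linear endomorphism of `k((t))` maps each lattice `tⁱk[[t]]`
into some lattice `tʲk[[t]]`. -/
theorem exists_lattice_image_subset_lattice (k : Type*) [Field k]
    (A : LaurentSeries k →ₗ[k] LaurentSeries k) (hA : Continuous A) :
    ∀ i : ℤ, ∃ j : ℤ, Set.MapsTo A (latticeAt k i) (latticeAt k j) := by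
  classical
  -- The lattice description via the valuation
  have hlat : ∀ (D : ℤ) (f : LaurentSeries k),
      f ∈ latticeAt k D ↔ Valued.v f ≤ ((Multiplicative.ofAdd (-D) : Multiplicative ℤ) : WithZero (Multiplicative ℤ)) := by
    intro D f
    exact (LaurentSeries.valuation_le_iff_coeff_lt_eq_zero k).symm
  -- latticeAt k 0 is a neighbourhood of 0
  have h0 : latticeAt k 0 ∈ nhds (0 : LaurentSeries k) := by
    rw [Valued.mem_nhds_zero]
    refine ⟨1, fun x hx => ?_⟩
    rw [hlat]
    rw [Set.mem_setOf_eq, Valuation.restrict_lt_iff_lt_embedding] at hx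
    simpa using le_of_lt hx
  have hpre : A ⁻¹' (latticeAt k 0) ∈ nhds (0 : LaurentSeries k) := by
    have : Filter.Tendsto A (nhds 0) (nhds (A 0)) := hA.tendsto 0
    rw [map_zero] at this
    exact this h0
  rw [Valued.mem_nhds_zero] at hpre
  obtain ⟨γ, hγ⟩ := hpre
  -- extract N with latticeAt N ⊆ A⁻¹ (latticeAt 0)
  set m : ℤ := WithZero.log (MonoidWithZeroHom.ValueGroup₀.embedding γ.1) with hm
  have hγc : MonoidWithZeroHom.ValueGroup₀.embedding γ.1 = ((Multiplicative.ofAdd m : Multiplicative ℤ) : WithZero (Multiplicative ℤ)) := by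
    rw [hm]
    exact (WithZero.exp_log (by simp)).symm
  set N : ℤ := -m + 1 with hN
  have hNsub : ∀ x : LaurentSeries k, x ∈ latticeAt k N → A x ∈ latticeAt k 0 := by
    intro x hx
    apply hγ
    show Valued.v.restrict x < γ.1
    rw [Valuation.restrict_lt_iff_lt_embedding]
    have h1 : Valued.v x ≤ ((Multiplicative.ofAdd (-N) : Multiplicative ℤ) : WithZero (Multiplicative ℤ)) :=
      (hlat N x).mp hx
    refine lt_of_le_of_lt h1 ?_
    rw [hγc]
    rw [WithZero.coe_lt_coe, Multiplicative.ofAdd_lt]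
    omega
  intro i
  set M : ℤ := max i N with hM
  set S : Finset ℤ := Finset.Ico i M with hS
  set j : ℤ := (insert (0:ℤ) (S.image fun n => (A (HahnSeries.single n (1:k))).order)).min'
      ⟨0, Finset.mem_insert_self _ _⟩ with hj
  have hj0 : j ≤ 0 := Finset.min'_le _ _ (Finset.mem_insert_self _ _)
  have hjn : ∀ n ∈ S, j ≤ (A (HahnSeries.single n (1:k))).order := fun n hn =>
    Finset.min'_le _ _ (Finset.mem_insert_of_mem (Finset.mem_image_of_mem _ hn))
  refine ⟨j, fun f hf => ?_⟩
  set h : LaurentSeries k := ∑ n ∈ S, f.coeff n • HahnSeries.single n (1:k) with hh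
  have hcoeffh : ∀ n : ℤ, h.coeff n = if n ∈ S then f.coeff n else 0 := by
    intro n
    rw [hh, coeff_sum']
    rw [show (∑ x ∈ S, (f.coeff x • HahnSeries.single x (1:k)).coeff n)
        = ∑ x ∈ S, if n = x then f.coeff x else 0 from Finset.sum_congr rfl fun x _ => by
          simp [HahnSeries.coeff_single]]
    exact Finset.sum_ite_eq S n _
  set g : LaurentSeries k := f - h with hg
  have hgmem : g ∈ latticeAt k N := by
    intro n hn
    rw [hg, HahnSeries.coeff_sub, hcoeffh]
    by_cases hni : n ∈ S
    · simp [hni]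
    · have : n < i := by
        rw [hS, Finset.mem_Ico] at hni
        omega
      simp [hf n this, hni]
  have hAg : A g ∈ latticeAt k 0 := hNsub g hgmem
  intro n hn
  have hfgh : f = g + h := by rw [hg]; ring
  have : A f = A g + A h := by rw [hfgh, map_add]
  rw [this, HahnSeries.coeff_add, hAg n (lt_of_lt_of_le hn hj0)]
  rw [zero_add, hh, map_sum]
  rw [show (∑ x ∈ S, A (f.coeff x • HahnSeries.single x (1:k)))
      = ∑ x ∈ S, f.coeff x • A (HahnSeries.single x (1:k)) from
    Finset.sum_congr rfl fun x _ => by rw [map_smul]]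
  rw [coeff_sum']
  apply Finset.sum_eq_zero
  intro x hx
  rw [HahnSeries.coeff_smul,
    HahnSeries.coeff_eq_zero_of_lt_order (lt_of_lt_of_le hn (hjn x hx)), smul_zero]
end

section
/- Let k be a field and let (A_{ij})_{i,j ∈ ℤ} be a family of continuous k-linear endomorphisms of k((u)). Suppose there exists a nondecreasing function a : ℤ → ℤ with a(i) → +∞ as i → +∞ such that A_{ij} = 0 whenever j < a(i). Then there exists a unique k-linear endomorphism A of the field k((u))((t)) of Laurent series in t over k((u)) such that for every x ∈ k((u))((t)) and every j ∈ ℤ, the tʲ-coefficient of A(x) (an element of k((u))) equals Σ_i A_{ij}(x_i), where x_i ∈ k((u)) is the tⁱ-coefficient of x; for each fixed x and j this sum has only finitely many nonzero terms. -/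
open Filter

set_option maxHeartbeats 1000000

lemma support_bddBelow_aux {R : Type*} [Zero R] (x : HahnSeries ℤ R) :
    BddBelow (Function.support x.coeff) := by
  rcases Set.eq_empty_or_nonempty (Function.support x.coeff) with h | h
  · simp [h]
  · exact ⟨x.isPWO_support.isWF.min h, fun i hi => x.isPWO_support.isWF.min_le h hi⟩

/-- Given a matrix `(A i j)` of continuous `k`-linear endomorphisms of `k((u))`
with `A i j = 0` for `j < a i`, where `a : ℤ → ℤ` is nondecreasing and tends to
`+∞`, there is a unique `k`-linear endomorphism `B` of the two-dimensional local
field `k((u))((t))` such that for every `x` and every `j` the `tʲ`-coefficient of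
`B x` is the (finitely supported) sum `Σ_i (A i j) (x_i)`, where `x_i ∈ k((u))`
is the `tⁱ`-coefficient of `x`. -/
theorem exists_unique_linear_of_matrix_two_dim (k : Type*) [Field k]
    (A : ℤ → ℤ → (LaurentSeries k →ₗ[k] LaurentSeries k))
    (hAc : ∀ i j : ℤ, Continuous (A i j))
    (a : ℤ → ℤ) (ha : Monotone a) (ha' : Tendsto a atTop atTop)
    (hA : ∀ i j : ℤ, j < a i → A i j = 0) :
    ∃! B : LaurentSeries (LaurentSeries k) →ₗ[k] LaurentSeries (LaurentSeries k),
      ∀ (x : LaurentSeries (LaurentSeries k)) (j : ℤ),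
        (Function.support fun i : ℤ => A i j (x.coeff i)).Finite ∧
        (B x).coeff j = ∑ᶠ i : ℤ, A i j (x.coeff i) := by
  -- finiteness of the supports
  have hfin : ∀ (x : LaurentSeries (LaurentSeries k)) (j : ℤ),
      (Function.support fun i : ℤ => A i j (x.coeff i)).Finite := by
    intro x j
    obtain ⟨n₀, hn₀⟩ := support_bddBelow_aux x
    obtain ⟨N, hN⟩ := (ha'.eventually_ge_atTop (j + 1)).exists_forall_of_atTop
    apply Set.Finite.subset (Set.finite_Ico n₀ N)
    intro i hi
    simp only [Function.mem_support] at hi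
    constructor
    · by_contra hcon
      push_neg at hcon
      have : x.coeff i = 0 := by
        by_contra h0
        exact absurd (hn₀ h0) (not_le.mpr hcon)
      simp [this] at hi
    · by_contra hcon
      push_neg at hcon
      have : A i j = 0 := hA i j (by linarith [hN i hcon])
      simp [this] at hi
  -- the coefficient function has bounded-below support
  have hbdd : ∀ (x : LaurentSeries (LaurentSeries k)),
      BddBelow (Function.support fun j : ℤ => ∑ᶠ i : ℤ, A i j (x.coeff i)) := by
    intro x
    obtain ⟨n₀, hn₀⟩ := support_bddBelow_aux x
    refine ⟨a n₀, fun j hj => ?_⟩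
    simp only [Function.mem_support] at hj
    by_contra hcon
    push_neg at hcon
    apply hj
    apply finsum_eq_zero_of_forall_eq_zero
    intro i
    rcases le_or_gt n₀ i with h | h
    · rw [hA i j (lt_of_lt_of_le hcon (ha h))]; simp
    · have : x.coeff i = 0 := by
        by_contra h0
        exact absurd (hn₀ h0) (not_le.mpr h)
      simp [this]
  -- construct B
  set F : LaurentSeries (LaurentSeries k) → LaurentSeries (LaurentSeries k) :=
    fun x => HahnSeries.ofSuppBddBelow (fun j => ∑ᶠ i : ℤ, A i j (x.coeff i)) (hbdd x) with hF
  have hFcoeff : ∀ x j, (F x).coeff j = ∑ᶠ i : ℤ, A i j (x.coeff i) := fun _ _ => rfl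
  refine ⟨{ toFun := F, map_add' := ?_, map_smul' := ?_ }, fun x j => ⟨hfin x j, rfl⟩, ?_⟩
  · intro x y
    apply HahnSeries.ext; funext j
    rw [HahnSeries.coeff_add, hFcoeff, hFcoeff, hFcoeff]
    calc (∑ᶠ i : ℤ, A i j ((x + y).coeff i))
        = ∑ᶠ i : ℤ, (A i j (x.coeff i) + A i j (y.coeff i)) := by
          congr 1; funext i; rw [HahnSeries.coeff_add, map_add]
      _ = (∑ᶠ i : ℤ, A i j (x.coeff i)) + ∑ᶠ i : ℤ, A i j (y.coeff i) :=
          finsum_add_distrib (hfin x j) (hfin y j)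
  · intro c x
    apply HahnSeries.ext; funext j
    rw [RingHom.id_apply, HahnSeries.coeff_smul, hFcoeff, hFcoeff]
    calc (∑ᶠ i : ℤ, A i j ((c • x).coeff i))
        = ∑ᶠ i : ℤ, c • A i j (x.coeff i) := by
          congr 1; funext i; rw [HahnSeries.coeff_smul, map_smul]
      _ = c • ∑ᶠ i : ℤ, A i j (x.coeff i) := by rw [smul_finsum]
  · intro B hB
    apply LinearMap.ext
    intro x
    apply HahnSeries.ext; funext j
    rw [(hB x j).2]; exact (hFcoeff x j).symm
end

section
/- Let R be a Noetherian integral domain, M₂ a finitely generated R-module, M₁ ⊆ M₂ a submodule, and π : M₂ → M₂/M₁ the quotient map. Let N₁ ⊆ M₁ and N₃ ⊆ M₂/M₁ be submodules such that the quotients M₁/N₁ and (M₂/M₁)/N₃ are torsion R-modules. Then there exists a submodule N₂ ⊆ M₂ such that N₂ ∩ M₁ ⊆ N₁, π(N₂) ⊆ N₃, and M₂/N₂ is a torsion R-module. -/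
open Pointwise

/-- Over a Noetherian integral domain `R`, given a finitely generated module `M₂`,
a submodule `M₁ ⊆ M₂`, submodules `N₁ ⊆ M₁` and `N₃ ⊆ M₂/M₁` with torsion quotients
`M₁/N₁` and `(M₂/M₁)/N₃`, there is a submodule `N₂ ⊆ M₂` with `N₂ ∩ M₁ ≤ N₁`,
`π(N₂) ⊆ N₃` (where `π : M₂ → M₂/M₁` is the quotient map), and `M₂/N₂` torsion. -/
theorem exists_submodule_compatible_torsion
    (R : Type*) [CommRing R] [IsDomain R] [IsNoetherianRing R]
    (M₂ : Type*) [AddCommGroup M₂] [Module R M₂] [Module.Finite R M₂]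
    (M₁ : Submodule R M₂) (N₁ : Submodule R M₁) (N₃ : Submodule R (M₂ ⧸ M₁))
    (h₁ : Module.IsTorsion R (M₁ ⧸ N₁))
    (h₃ : Module.IsTorsion R ((M₂ ⧸ M₁) ⧸ N₃)) :
    ∃ N₂ : Submodule R M₂,
      N₂ ⊓ M₁ ≤ N₁.map M₁.subtype ∧
      N₂.map M₁.mkQ ≤ N₃ ∧
      Module.IsTorsion R (M₂ ⧸ N₂) := by
  haveI : IsNoetherian R M₂ := isNoetherian_of_isNoetherianRing_of_finite R M₂
  haveI : Module.Finite R M₁ := Module.Finite.iff_fg.mpr (IsNoetherian.noetherian M₁)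
  -- a nonzero `r` annihilating `M₁ ⧸ N₁`
  obtain ⟨r, hrann, hr0⟩ := id
    (Submodule.annihilator_top_inter_nonZeroDivisors h₁)
  obtain ⟨s, hsann, hs0⟩ := id
    (Submodule.annihilator_top_inter_nonZeroDivisors h₃)
  have hr : ∀ x : M₁, r • x ∈ N₁ := by
    intro x
    have h := Module.isTorsionBySet_annihilator_top R (M₁ ⧸ N₁)
      (x := Submodule.Quotient.mk x) (a := ⟨r, hrann⟩)
    simpa [← Submodule.Quotient.mk_smul, Submodule.Quotient.mk_eq_zero] using h
  have hs : ∀ y : M₂ ⧸ M₁, s • y ∈ N₃ := by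
    intro y
    have h := Module.isTorsionBySet_annihilator_top R ((M₂ ⧸ M₁) ⧸ N₃)
      (x := Submodule.Quotient.mk y) (a := ⟨s, hsann⟩)
    simpa [← Submodule.Quotient.mk_smul, Submodule.Quotient.mk_eq_zero] using h
  -- the increasing chain `Cₙ = {w : rⁿ • w ∈ M₁}` stabilizes
  let C : ℕ →o Submodule R M₂ :=
    ⟨fun n => M₁.comap (LinearMap.lsmul R M₂ (r ^ n)),
     monotone_nat_of_le_succ (fun n x hx => by
      simp only [Submodule.mem_comap, LinearMap.lsmul_apply] at *
      rw [pow_succ', mul_smul]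
      exact M₁.smul_mem r hx)⟩
  obtain ⟨N, hN⟩ := monotone_stabilizes_iff_noetherian.mpr ‹IsNoetherian R M₂› C
  have hstab : C (N + 1) ≤ C N := le_of_eq (hN (N + 1) (Nat.le_succ N)).symm
  set P : Submodule R M₂ := N₃.comap M₁.mkQ with hP
  refine ⟨(r ^ (N + 1)) • P, ?_, ?_, ?_⟩
  · rintro z ⟨hz1, hz2⟩
    obtain ⟨p, hp, rfl⟩ := hz1
    have hpC : p ∈ C (N + 1) := hz2
    have hpN : r ^ N • p ∈ M₁ := hstab hpC
    refine ⟨r • ⟨r ^ N • p, hpN⟩, hr _, ?_⟩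
    simp [pow_succ', mul_smul, DistribMulAction.toLinearMap]
  · rintro y ⟨x, hx, rfl⟩
    obtain ⟨p, hp, rfl⟩ := hx
    have : M₁.mkQ ((r ^ (N + 1)) • p) = (r ^ (N + 1)) • M₁.mkQ p := map_smul _ _ _
    rw [show (DistribSMul.toLinearMap R M₂ (r ^ (N + 1))) p = (r ^ (N + 1)) • p from rfl,
      this]
    exact N₃.smul_mem _ hp
  · intro x
    obtain ⟨y, rfl⟩ := Submodule.Quotient.mk_surjective _ x
    refine ⟨⟨r ^ (N + 1) * s, mem_nonZeroDivisors_of_ne_zero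
      (mul_ne_zero (pow_ne_zero _ (nonZeroDivisors.ne_zero hr0))
        (nonZeroDivisors.ne_zero hs0))⟩, ?_⟩
    rw [Submonoid.smul_def, ← Submodule.Quotient.mk_smul, Submodule.Quotient.mk_eq_zero]
    have hsy : s • y ∈ P := by
      simp only [hP, Submodule.mem_comap, map_smul]
      exact hs _
    have : (r ^ (N + 1)) • (s • y) ∈ (r ^ (N + 1)) • P :=
      Submodule.smul_mem_pointwise_smul _ _ _ hsy
    simpa [mul_smul] using this
end

section
/- Let k be a field and m ≥ 1 an integer. There exists an injective homomorphism of k-algebras from the matrix algebra M_m(k((t))) of m × m matrices over k((t)) into the k-algebra of continuous k-linear endomorphisms of k((t)). -/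
/-- The scalar action of `k` on `k((t))` is continuous in each scalar,
since it is given by multiplication by a constant in the topological ring `k((t))`. -/
noncomputable instance LaurentSeries.continuousConstSMul (k : Type*) [Field k] :
    ContinuousConstSMul k (LaurentSeries k) :=
  ⟨fun c => by
    have h : (fun x : LaurentSeries k => c • x) =
        fun x => algebraMap k (LaurentSeries k) c * x := by
      funext x
      have h2 : algebraMap k (LaurentSeries k) c = HahnSeries.single (0 : ℤ) c := by
        rw [HahnSeries.algebraMap_apply', ← PowerSeries.C_eq_algebraMap,
          HahnSeries.ofPowerSeries_C, HahnSeries.C_apply]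
      rw [h2, HahnSeries.single_zero_mul_eq_smul]
    rw [h]
    exact continuous_mul_left _⟩

open HahnSeries Multiplicative
set_option synthInstance.maxHeartbeats 1000000
set_option maxHeartbeats 1000000

namespace MatEmb

variable {k : Type*} [Field k]
local notation "K" => LaurentSeries k
variable (m : ℕ) [NeZero m]

lemma mpos : (0:ℤ) < (m:ℤ) := by exact_mod_cast Nat.pos_of_ne_zero (NeZero.ne m)

noncomputable def emb (i : Fin m) : ℤ ↪o ℤ :=
  OrderEmbedding.ofStrictMono (fun n => (m:ℤ) * n + (i:ℤ))
    (fun a b hab => by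
      have := mpos m
      have h1 : (m:ℤ) * a < (m:ℤ) * b := (mul_lt_mul_iff_right₀ this).mpr hab
      simpa using add_lt_add_right h1 (i:ℤ))

lemma emb_apply (i : Fin m) (n : ℤ) : emb m i n = (m:ℤ) * n + (i:ℤ) := rfl

lemma mod_eq (i : Fin m) (n : ℤ) : ((m:ℤ) * n + (i:ℤ)) % (m:ℤ) = (i:ℤ) := by
  rw [add_comm, Int.add_mul_emod_self_left]
  exact Int.emod_eq_of_lt (by exact_mod_cast Nat.zero_le _) (by exact_mod_cast i.isLt)

lemma not_mem_range_emb {i : Fin m} {l : ℤ} (h : l % (m:ℤ) ≠ (i:ℤ)) :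
    l ∉ Set.range (emb m i) := by
  rintro ⟨n, rfl⟩
  exact h (mod_eq m i n)

noncomputable def iotaL (i : Fin m) : K →ₗ[k] K := embDomainLinearMap (emb m i)

lemma iotaL_coeff (i : Fin m) (f : K) (n : ℤ) :
    (iotaL m i f).coeff ((m:ℤ) * n + (i:ℤ)) = f.coeff n := by
  simpa [emb_apply, iotaL, embDomainLinearMap_apply] using embDomain_coeff (f := emb m i) (x := f) (a := n)

lemma iotaL_coeff_ne (i : Fin m) (f : K) {l : ℤ} (h : l % (m:ℤ) ≠ (i:ℤ)) :
    (iotaL m i f).coeff l = 0 :=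
  embDomain_notin_range (not_mem_range_emb m h)

noncomputable def piL (i : Fin m) : K →ₗ[k] K where
  toFun f :=
    { coeff := fun n => f.coeff ((m:ℤ) * n + (i:ℤ))
      isPWO_support' := by
        rw [Set.isPWO_iff_exists_monotone_subseq]
        intro seq hseq
        obtain ⟨g, hg⟩ := f.isPWO_support'.exists_monotone_subseq
          (f := fun n => (m:ℤ) * seq n + (i:ℤ)) (fun n => hseq n)
        refine ⟨g, fun a b hab => ?_⟩
        have h2 := hg hab
        simp only [Function.comp_apply] at h2 ⊢
        have := mpos m
        nlinarith [h2] }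
  map_add' f g := by ext n; simp
  map_smul' c f := by ext n; simp

lemma piL_coeff (i : Fin m) (f : K) (n : ℤ) :
    (piL m i f).coeff n = f.coeff ((m:ℤ) * n + (i:ℤ)) := rfl

lemma lt_coe_iff_le (a : WithZero (Multiplicative ℤ)) (d : ℤ) :
    a < ((Multiplicative.ofAdd d : Multiplicative ℤ) : WithZero (Multiplicative ℤ)) ↔
      a ≤ ((Multiplicative.ofAdd (d - 1) : Multiplicative ℤ) : WithZero (Multiplicative ℤ)) := by
  rcases eq_or_ne a 0 with rfl | h
  · simp [WithZero.zero_lt_coe, zero_le']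
  · obtain ⟨b, rfl⟩ := WithZero.ne_zero_iff_exists.mp h
    rw [WithZero.coe_lt_coe, WithZero.coe_le_coe, ← ofAdd_toAdd b, ofAdd_lt, ofAdd_le]
    omega

lemma lt_iff_coeff (f : K) (d : ℤ) :
    Valued.v f < ((Multiplicative.ofAdd d : Multiplicative ℤ) : WithZero (Multiplicative ℤ)) ↔
      ∀ n : ℤ, n < 1 - d → f.coeff n = 0 := by
  rw [lt_coe_iff_le]
  have : d - 1 = -(1 - d) := by ring
  rw [this]
  exact LaurentSeries.valuation_le_iff_coeff_lt_eq_zero k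

lemma continuous_of_coeff (T : K →ₗ[k] K)
    (h : ∀ D : ℤ, ∃ D' : ℤ, ∀ f : K, (∀ n < D', f.coeff n = 0) →
      ∀ n < D, (T f).coeff n = 0) : Continuous T := by
  apply continuous_of_continuousAt_zero T.toAddMonoidHom
  rw [ContinuousAt, LinearMap.toAddMonoidHom_coe, map_zero]
  rw [(Valued.hasBasis_nhds_zero K (WithZero (Multiplicative ℤ))).tendsto_iff (Valued.hasBasis_nhds_zero K (WithZero (Multiplicative ℤ)))]
  rintro γ -
  have hγ0 : MonoidWithZeroHom.ValueGroup₀.embedding γ.1 ≠ 0 := by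
    simpa using MonoidWithZeroHom.ValueGroup₀.embedding_injective.ne γ.ne_zero
  obtain ⟨b, hb⟩ := WithZero.ne_zero_iff_exists.mp hγ0
  obtain ⟨D', hD'⟩ := h (1 - b.toAdd)
  have hy : (Valued.v (HahnSeries.single (D' - 1) (1 : k) : K) : WithZero (Multiplicative ℤ)) ≠ 0 := by
    rw [LaurentSeries.valuation_single_zpow]; exact WithZero.exp_ne_zero
  refine ⟨Units.mk0 ((Valued.v : Valuation K (WithZero (Multiplicative ℤ))).restrict
    (HahnSeries.single (D' - 1) (1 : k) : K))
    ((Valuation.restrict_pos_iff _ _).mpr (zero_lt_iff.mpr hy)).ne', trivial, fun f hf => ?_⟩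
  simp only [Set.mem_setOf_eq, Units.val_mk0] at hf ⊢
  rw [Valuation.restrict_lt_iff, LaurentSeries.valuation_single_zpow, WithZero.exp_eq_coe_ofAdd,
    lt_iff_coeff] at hf
  rw [Valuation.restrict_lt_iff_lt_embedding, ← hb, ← ofAdd_toAdd b, lt_iff_coeff]
  exact hD' f (by intro n hn; apply hf; omega)

lemma continuous_piL (i : Fin m) : Continuous (piL m i : K →ₗ[k] K) := by
  apply continuous_of_coeff
  intro D
  refine ⟨(m:ℤ) * D, fun f hf n hn => ?_⟩
  rw [piL_coeff]
  apply hf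
  have hm := mpos m
  have hi : (i:ℤ) < (m:ℤ) := by exact_mod_cast i.isLt
  nlinarith

lemma continuous_iotaL (i : Fin m) : Continuous (iotaL m i : K →ₗ[k] K) := by
  apply continuous_of_coeff
  intro D
  refine ⟨(D - 1) / (m:ℤ) + 1, fun f hf l hl => ?_⟩
  by_cases h : l % (m:ℤ) = (i:ℤ)
  · have hdm : (m:ℤ) * (l / (m:ℤ)) + (i:ℤ) = l := by
      have := Int.mul_ediv_add_emod l (m:ℤ)
      omega
    rw [← hdm, iotaL_coeff]
    apply hf
    have hq : l / (m:ℤ) ≤ (D - 1) / (m:ℤ) := by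
      rw [Int.le_ediv_iff_mul_le (mpos m)]
      have hi : (0:ℤ) ≤ (i:ℤ) := by exact_mod_cast Nat.zero_le _
      nlinarith [hdm]
    omega
  · exact iotaL_coeff_ne m i f h

noncomputable def piC (i : Fin m) : K →L[k] K := ⟨piL m i, continuous_piL m i⟩
noncomputable def iotaC (i : Fin m) : K →L[k] K := ⟨iotaL m i, continuous_iotaL m i⟩

instance : SMulCommClass k K K :=
  ⟨fun c x y => by
    rw [smul_eq_mul, smul_eq_mul, ← single_zero_mul_eq_smul, ← single_zero_mul_eq_smul]
    ring⟩

instance : IsScalarTower k K K :=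
  ⟨fun c x y => by
    rw [smul_eq_mul, smul_eq_mul, ← single_zero_mul_eq_smul, ← single_zero_mul_eq_smul]
    ring⟩

noncomputable def mulC (x : K) : K →L[k] K := ⟨LinearMap.mulLeft k x, continuous_mul_left x⟩

@[simp] lemma mulC_apply (x f : K) : mulC (k := k) x f = x * f := rfl

lemma mulC_mul (x y : K) : (mulC (k := k) x).comp (mulC y) = mulC (x * y) := by
  ext f; simp [mul_assoc]

lemma mulC_one : mulC (k := k) 1 = ContinuousLinearMap.id k K := by ext f; simp

lemma mulC_zero : mulC (k := k) 0 = 0 := by ext f; simp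

lemma mulC_add (x y : K) : mulC (k := k) (x + y) = mulC x + mulC y := by
  ext f; simp [add_mul]

lemma mulC_smul (c : k) (x : K) : mulC (k := k) (c • x) = c • mulC x := by
  ext f; simp [smul_mul_assoc]

lemma mulC_algebraMap (c : k) :
    mulC (k := k) (algebraMap k K c) = c • ContinuousLinearMap.id k K := by
  have h2 : algebraMap k K c = HahnSeries.single (0 : ℤ) c := by
    rw [HahnSeries.algebraMap_apply', ← PowerSeries.C_eq_algebraMap,
      HahnSeries.ofPowerSeries_C, HahnSeries.C_apply]
  refine ContinuousLinearMap.ext fun f => ?_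
  show algebraMap k K c * f = c • f
  rw [h2, single_zero_mul_eq_smul]

lemma piC_comp_iotaC (i j : Fin m) :
    (piC m j : K →L[k] K).comp (iotaC m i) =
      if i = j then ContinuousLinearMap.id k K else 0 := by
  refine ContinuousLinearMap.ext fun f => ?_
  ext n
  by_cases h : i = j
  · subst h
    simp only [ContinuousLinearMap.comp_apply, if_pos rfl, ContinuousLinearMap.id_apply]
    show (piL m i (iotaL m i f)).coeff n = f.coeff n
    rw [piL_coeff, iotaL_coeff]
  · simp only [ContinuousLinearMap.comp_apply, if_neg h]
    show (piL m j (iotaL m i f)).coeff n = ((0 : K →L[k] K) f).coeff n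
    rw [piL_coeff, iotaL_coeff_ne]
    · simp
    · rw [mod_eq]
      intro hc
      exact h (Fin.ext (by exact_mod_cast hc.symm))

lemma sum_iotaC_piC :
    (∑ i : Fin m, (iotaC m i : K →L[k] K).comp (piC m i)) = ContinuousLinearMap.id k K := by
  refine ContinuousLinearMap.ext fun f => ?_
  ext l
  have hsum : ((∑ i : Fin m, (iotaC m i : K →L[k] K).comp (piC m i)) f).coeff l =
      ∑ i : Fin m, (iotaL m i (piL m i f)).coeff l := by
    rw [ContinuousLinearMap.sum_apply]
    exact map_sum (coeff.addMonoidHom l) _ _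
  rw [hsum]
  have hmod0 : (0:ℤ) ≤ l % (m:ℤ) := Int.emod_nonneg l (by exact_mod_cast NeZero.ne m)
  have hmodlt : l % (m:ℤ) < (m:ℤ) := Int.emod_lt_of_pos l (mpos m)
  set i₀ : Fin m := ⟨(l % (m:ℤ)).toNat, by
    rw [← Nat.cast_lt (α := ℤ), Int.toNat_of_nonneg hmod0]; exact_mod_cast hmodlt⟩ with hi₀
  have hi₀coe : (i₀ : ℤ) = l % (m:ℤ) := by
    simp [hi₀, Int.toNat_of_nonneg hmod0]
  rw [Finset.sum_eq_single i₀]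
  · have hdm : (m:ℤ) * (l / (m:ℤ)) + (i₀:ℤ) = l := by
      have := Int.mul_ediv_add_emod l (m:ℤ)
      omega
    rw [← hdm, iotaL_coeff, piL_coeff, hdm]
    simp
  · intro i _ hne
    apply iotaL_coeff_ne
    rw [← hi₀coe]
    intro hc
    exact hne (Fin.ext (by exact_mod_cast hc)).symm
  · intro h; exact absurd (Finset.mem_univ i₀) h

lemma piC_iotaC_apply (i j : Fin m) (g : K) :
    (piC m j : K →L[k] K) (iotaC m i g) = if i = j then g else 0 := by
  have := DFunLike.congr_fun (piC_comp_iotaC (k := k) m i j) g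
  simp only [ContinuousLinearMap.comp_apply] at this
  rw [this]
  split <;> simp

lemma mulC_sum {α : Type*} (s : Finset α) (x : α → K) :
    mulC (k := k) (∑ j ∈ s, x j) = ∑ j ∈ s, mulC (x j) := by
  classical
  induction s using Finset.induction_on with
  | empty => simp [mulC_zero]
  | insert _ _ h ih => rw [Finset.sum_insert h, Finset.sum_insert h, mulC_add, ih]

/-- one building block -/
noncomputable def blk (i j : Fin m) (x : K) : K →L[k] K :=
  (iotaC m i).comp ((mulC x).comp (piC m j))

lemma blk_comp_blk (i j l p : Fin m) (x y : K) :
    (blk m i j x).comp (blk m l p y) = if l = j then blk m i p (x * y) else 0 := by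
  refine ContinuousLinearMap.ext fun f => ?_
  simp only [blk, ContinuousLinearMap.comp_apply, mulC_apply, piC_iotaC_apply]
  split
  · simp [mul_assoc]
  · simp

lemma blk_sum_diag : (∑ i : Fin m, blk m i i (1 : K)) = ContinuousLinearMap.id k K := by
  have h : ∀ i : Fin m, blk m i i (1 : K) = (iotaC m i : K →L[k] K).comp (piC m i) := by
    intro i
    rw [blk, mulC_one]
    rfl
  simp only [h]
  exact sum_iotaC_piC m

/-- the representation, as a linear map -/
noncomputable def PhiL : Matrix (Fin m) (Fin m) K →ₗ[k] (K →L[k] K) where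
  toFun A := ∑ i : Fin m, ∑ j : Fin m, blk m i j (A i j)
  map_add' A B := by
    simp only [Matrix.add_apply]
    rw [← Finset.sum_add_distrib]
    refine Finset.sum_congr rfl fun i _ => ?_
    rw [← Finset.sum_add_distrib]
    refine Finset.sum_congr rfl fun j _ => ?_
    simp only [blk, mulC_add, ContinuousLinearMap.add_comp, ContinuousLinearMap.comp_add]
  map_smul' c A := by
    simp only [Matrix.smul_apply, RingHom.id_apply]
    rw [Finset.smul_sum]
    refine Finset.sum_congr rfl fun i _ => ?_
    rw [Finset.smul_sum]
    refine Finset.sum_congr rfl fun j _ => ?_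
    simp only [blk, mulC_smul, ContinuousLinearMap.smul_comp, ContinuousLinearMap.comp_smulₛₗ]
    rfl

lemma PhiL_apply (A : Matrix (Fin m) (Fin m) K) :
    PhiL m A = ∑ i : Fin m, ∑ j : Fin m, blk m i j (A i j) := rfl

lemma PhiL_one : PhiL m (1 : Matrix (Fin m) (Fin m) K) = ContinuousLinearMap.id k K := by
  rw [PhiL_apply, ← blk_sum_diag m]
  refine Finset.sum_congr rfl fun i _ => ?_
  rw [Finset.sum_eq_single i]
  · rw [Matrix.one_apply_eq]
  · intro j _ hji
    rw [Matrix.one_apply_ne' hji]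
    simp [blk, mulC_zero]
  · intro h; exact absurd (Finset.mem_univ i) h

lemma sum_comp' {α : Type*} (s : Finset α) (T : α → (K →L[k] K)) (S : K →L[k] K) :
    (∑ a ∈ s, T a).comp S = ∑ a ∈ s, (T a).comp S := by
  refine ContinuousLinearMap.ext fun f => ?_
  simp

lemma comp_sum' {α : Type*} (s : Finset α) (T : α → (K →L[k] K)) (S : K →L[k] K) :
    S.comp (∑ a ∈ s, T a) = ∑ a ∈ s, S.comp (T a) := by
  refine ContinuousLinearMap.ext fun f => ?_
  simp

lemma blk_sum_x {α : Type*} (i p : Fin m) (s : Finset α) (x : α → K) :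
    blk m i p (∑ j ∈ s, x j) = ∑ j ∈ s, blk m i p (x j) := by
  simp only [blk, mulC_sum, sum_comp', comp_sum']

lemma PhiL_mul (A B : Matrix (Fin m) (Fin m) K) :
    PhiL m (A * B) = PhiL m A * PhiL m B := by
  simp only [PhiL_apply]
  symm
  have expand : (∑ i : Fin m, ∑ j : Fin m, blk m i j (A i j)) *
      (∑ l : Fin m, ∑ p : Fin m, blk m l p (B l p)) =
      ∑ i : Fin m, ∑ j : Fin m, ∑ l : Fin m, ∑ p : Fin m,
        (blk m i j (A i j)).comp (blk m l p (B l p)) := by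
    rw [ContinuousLinearMap.mul_def, sum_comp']
    refine Finset.sum_congr rfl fun i _ => ?_
    rw [sum_comp']
    refine Finset.sum_congr rfl fun j _ => ?_
    rw [comp_sum']
    refine Finset.sum_congr rfl fun l _ => ?_
    rw [comp_sum']
  rw [expand]
  simp only [blk_comp_blk]
  refine Finset.sum_congr rfl fun i _ => ?_
  have e : ∀ j : Fin m, (∑ l : Fin m, ∑ p : Fin m,
      if l = j then blk m i p (A i j * B l p) else 0)
      = ∑ p : Fin m, blk m i p (A i j * B j p) := by
    intro j
    rw [Finset.sum_comm]
    refine Finset.sum_congr rfl fun p _ => ?_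
    simp
  rw [Finset.sum_congr rfl fun j _ => e j]
  rw [Finset.sum_comm]
  refine Finset.sum_congr rfl fun p _ => ?_
  rw [Matrix.mul_apply, blk_sum_x]

/-- the representation as an algebra hom -/
noncomputable def Phi : Matrix (Fin m) (Fin m) K →ₐ[k] (K →L[k] K) where
  toFun A := PhiL m A
  map_one' := by
    show PhiL m (1 : Matrix (Fin m) (Fin m) K) = 1
    rw [PhiL_one]; rfl
  map_mul' := PhiL_mul m
  map_zero' := map_zero _
  map_add' := map_add _
  commutes' := fun c => by
    show PhiL m (algebraMap k (Matrix (Fin m) (Fin m) K) c) = algebraMap k (K →L[k] K) c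
    have hrhs : algebraMap k (K →L[k] K) c = c • (1 : K →L[k] K) :=
      Algebra.algebraMap_eq_smul_one c
    rw [hrhs, PhiL_apply]
    have step1 : (∑ i : Fin m, ∑ j : Fin m,
        blk m i j ((algebraMap k (Matrix (Fin m) (Fin m) K) c) i j))
        = ∑ i : Fin m, blk m i i (algebraMap k K c) := by
      refine Finset.sum_congr rfl fun i _ => ?_
      rw [Finset.sum_eq_single i]
      · rw [Matrix.algebraMap_matrix_apply, if_pos rfl]
      · intro j _ hji
        rw [Matrix.algebraMap_matrix_apply, if_neg (Ne.symm hji)]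
        simp [blk, mulC_zero]
      · intro h; exact absurd (Finset.mem_univ i) h
    rw [step1]
    have step2 : ∀ i : Fin m, blk m i i (algebraMap k K c)
        = c • ((iotaC m i : K →L[k] K).comp (piC m i)) := by
      intro i
      refine ContinuousLinearMap.ext fun f => ?_
      simp only [blk, ContinuousLinearMap.comp_apply, mulC_apply,
        ContinuousLinearMap.smul_apply]
      rw [show (algebraMap k K c) * (piC m i f) = c • (piC m i f) by
        rw [HahnSeries.algebraMap_apply', ← PowerSeries.C_eq_algebraMap,
          HahnSeries.ofPowerSeries_C, HahnSeries.C_apply, single_zero_mul_eq_smul]]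
      exact map_smul (iotaC m i : K →L[k] K) c _
    rw [Finset.sum_congr rfl fun i _ => step2 i, ← Finset.smul_sum, sum_iotaC_piC]
    rfl

lemma Phi_apply (A : Matrix (Fin m) (Fin m) K) : Phi m A = PhiL m A := by
  simp [Phi]

lemma Phi_injective : Function.Injective (Phi (k := k) m) := by
  refine (injective_iff_map_eq_zero _).mpr fun A hA => ?_
  ext i j
  have h1 : (piC m i : K →L[k] K) ((Phi m A) (iotaC m j 1)) = A i j := by
    rw [Phi_apply, PhiL_apply]
    simp only [ContinuousLinearMap.sum_apply, blk, ContinuousLinearMap.comp_apply,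
      mulC_apply, piC_iotaC_apply, map_sum, mul_ite, mul_one, mul_zero, apply_ite,
      map_zero, Finset.sum_ite_eq, Finset.sum_ite_eq', Finset.mem_univ, if_true]
  rw [hA] at h1
  simp only [ContinuousLinearMap.zero_apply, map_zero] at h1
  rw [← h1]
  rfl

end MatEmb

/-- The matrix algebra `M_m(k((t)))` embeds, as a `k`-algebra, into the algebra of
continuous `k`-linear endomorphisms of `k((t))`. -/
theorem matrix_algebra_embeds_continuous_endomorphisms (k : Type*) [Field k]
    (m : ℕ) (hm : 1 ≤ m) :
    ∃ φ : Matrix (Fin m) (Fin m) (LaurentSeries k) →ₐ[k]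
        (LaurentSeries k →L[k] LaurentSeries k),
      Function.Injective φ := by
  haveI : NeZero m := ⟨by omega⟩
  exact ⟨MatEmb.Phi m, MatEmb.Phi_injective m⟩
end

section
/- Let k be a field, m ≥ 1 an integer, and let E denote the k-algebra of continuous k-linear endomorphisms of k((t)). There exists an injective homomorphism of k-algebras from the m-fold product algebra E × ⋯ × E (with componentwise operations) into E. -/
namespace PiEmbedAux

open Multiplicative Filter

open WithZero

variable {k : Type*} [Field k] {m : ℕ}

/-- Residue index of `n` modulo `m`. -/
def idx (hm : 1 ≤ m) (n : ℤ) : Fin m :=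
  ⟨(n % (m : ℤ)).toNat, (Int.toNat_lt' (by omega)).mpr (Int.emod_lt_of_pos n (by omega))⟩

lemma idx_coe (hm : 1 ≤ m) (n : ℤ) : ((idx hm n : ℕ) : ℤ) = n % (m : ℤ) :=
  Int.toNat_of_nonneg (Int.emod_nonneg n (by omega))

lemma idx_spec (hm : 1 ≤ m) (i : Fin m) (n : ℤ) : idx hm ((m : ℤ) * n + (i : ℤ)) = i := by
  have h : ((m : ℤ) * n + (i : ℤ)) % (m : ℤ) = (i : ℤ) := by
    rw [add_comm, Int.add_mul_emod_self_left,
      Int.emod_eq_of_lt (by omega) (by exact_mod_cast i.isLt)]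
  apply Fin.ext
  show ((((m : ℤ) * n + (i : ℤ)) % (m : ℤ)).toNat) = (i : ℕ)
  omega

lemma div_spec (hm : 1 ≤ m) (i : Fin m) (n : ℤ) : ((m : ℤ) * n + (i : ℤ)) / (m : ℤ) = n := by
  rw [add_comm, Int.add_mul_ediv_left _ _ (show (m : ℤ) ≠ 0 by omega),
    Int.ediv_eq_zero_of_lt (by omega) (by exact_mod_cast i.isLt), zero_add]

lemma ediv_lt_of_lt_mul {n D M : ℤ} (hM : 0 < M) (h : n < D * M) : n / M < D := by
  by_contra hc
  push_neg at hc
  have := (Int.le_ediv_iff_mul_le hM).mp hc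
  omega

/-- Extraction of the `i`-th interleaved component of a Laurent series. -/
noncomputable def extract (hm : 1 ≤ m) (i : Fin m) (x : LaurentSeries k) : LaurentSeries k :=
  HahnSeries.ofSuppBddBelow (fun n => x.coeff ((m : ℤ) * n + (i : ℤ)))
    (HahnSeries.forallLTEqZero_supp_BddBelow _ (min x.order 0) (by
      intro n' hn'
      have h1 : n' + 1 ≤ 0 := by
        have := lt_of_lt_of_le hn' (min_le_right _ _); omega
      have h2 : n' < x.order := lt_of_lt_of_le hn' (min_le_left _ _)
      have hi : (i : ℤ) < (m : ℤ) := by exact_mod_cast i.isLt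
      apply HahnSeries.coeff_eq_zero_of_lt_order
      nlinarith [mul_nonneg (show (0:ℤ) ≤ (m : ℤ) - 1 by omega)
        (show (0:ℤ) ≤ -(n' + 1) by omega)]))

@[simp] lemma extract_coeff (hm : 1 ≤ m) (i : Fin m) (x : LaurentSeries k) (n : ℤ) :
    (extract hm i x).coeff n = x.coeff ((m : ℤ) * n + (i : ℤ)) := rfl

/-- Interleaving of `m` Laurent series into one. -/
noncomputable def combine (hm : 1 ≤ m) (f : Fin m → LaurentSeries k) : LaurentSeries k :=
  HahnSeries.ofSuppBddBelow (fun n => (f (idx hm n)).coeff (n / (m : ℤ)))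
    (HahnSeries.forallLTEqZero_supp_BddBelow _
      ((m : ℤ) * Finset.univ.inf' ⟨⟨0, hm⟩, Finset.mem_univ _⟩ (fun i => min (f i).order 0)) (by
      intro n' hn'
      set N := Finset.univ.inf' ⟨⟨0, hm⟩, Finset.mem_univ _⟩ (fun i => min (f i).order 0) with hN
      apply HahnSeries.coeff_eq_zero_of_lt_order
      have h1 : n' / (m : ℤ) < N := ediv_lt_of_lt_mul (by omega)
        (by rw [mul_comm] at hn'; exact hn')
      have h2 : N ≤ (f (idx hm n')).order := by
        refine le_trans (Finset.inf'_le _ (Finset.mem_univ _)) (min_le_left _ _)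
      omega))

@[simp] lemma combine_coeff (hm : 1 ≤ m) (f : Fin m → LaurentSeries k) (n : ℤ) :
    (combine hm f).coeff n = (f (idx hm n)).coeff (n / (m : ℤ)) := rfl

lemma combine_extract (hm : 1 ≤ m) (x : LaurentSeries k) :
    combine hm (fun i => extract hm i x) = x := by
  ext n
  rw [combine_coeff, extract_coeff]
  congr 1
  have := idx_coe hm n
  have := Int.mul_ediv_add_emod n (m : ℤ)
  omega

lemma extract_combine (hm : 1 ≤ m) (f : Fin m → LaurentSeries k) (i : Fin m) :
    extract hm i (combine hm f) = f i := by
  ext n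
  rw [extract_coeff, combine_coeff, idx_spec hm i n, div_spec hm i n]

/-- `extract` as a `k`-linear map. -/
noncomputable def extractₗ (hm : 1 ≤ m) (i : Fin m) :
    LaurentSeries k →ₗ[k] LaurentSeries k where
  toFun := extract hm i
  map_add' x y := by ext n; simp [HahnSeries.coeff_add]
  map_smul' c x := by ext n; simp [HahnSeries.coeff_smul]

/-- `combine` as a `k`-linear map. -/
noncomputable def combineₗ (hm : 1 ≤ m) :
    (Fin m → LaurentSeries k) →ₗ[k] LaurentSeries k where
  toFun := combine hm
  map_add' f g := by ext n; simp [HahnSeries.coeff_add]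
  map_smul' c f := by ext n; simp [HahnSeries.coeff_smul]

open LaurentSeries in
lemma val_extract (hm : 1 ≤ m) (i : Fin m) (x : LaurentSeries k) (D : ℤ)
    (h : Valued.v x ≤ WithZero.exp (-((m : ℤ) * D))) :
    Valued.v (extract hm i x) ≤ WithZero.exp (-D) := by
  rw [valuation_le_iff_coeff_lt_eq_zero] at h ⊢
  intro n hn
  rw [extract_coeff]
  apply h
  have hi : (i : ℤ) < (m : ℤ) := by exact_mod_cast i.isLt
  nlinarith [mul_le_mul_of_nonneg_left (show n + 1 ≤ D by omega) (show (0:ℤ) ≤ (m : ℤ) by omega)]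

open LaurentSeries in
lemma val_combine (hm : 1 ≤ m) (f : Fin m → LaurentSeries k) (D : ℤ)
    (h : ∀ i, Valued.v (f i) ≤ WithZero.exp (-D)) :
    Valued.v (combine hm f) ≤ WithZero.exp (-((m : ℤ) * D)) := by
  rw [valuation_le_iff_coeff_lt_eq_zero]
  intro n hn
  rw [combine_coeff]
  exact (valuation_le_iff_coeff_lt_eq_zero k).mp (h _) _
    (ediv_lt_of_lt_mul (by omega) (by rw [mul_comm] at hn; exact hn))

lemma le_of_lt_coe (x : ℤᵐ⁰) (e : ℤ)
    (h : x < WithZero.exp e) :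
    x ≤ WithZero.exp (e - 1) := by
  rcases eq_or_ne x 0 with rfl | hx
  · exact zero_le'
  · rw [← WithZero.exp_log hx] at h ⊢
    rw [WithZero.exp_lt_exp] at h
    rw [WithZero.exp_le_exp]
    omega

lemma mem_nhds_zero_exp {s : Set (LaurentSeries k)} :
    s ∈ nhds 0 ↔ ∃ d : ℤ, {x : LaurentSeries k | Valued.v x < WithZero.exp d} ⊆ s := by
  constructor
  · intro hs
    obtain ⟨γ, hγ⟩ := Valued.mem_nhds_zero.mp hs
    have hne : MonoidWithZeroHom.ValueGroup₀.embedding γ.1 ≠ 0 := by simpa using γ.ne_zero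
    refine ⟨WithZero.log (MonoidWithZeroHom.ValueGroup₀.embedding γ.1), fun x hx => hγ ?_⟩
    simp only [Set.mem_setOf_eq] at hx ⊢
    rw [Valuation.restrict_lt_iff_lt_embedding]
    rwa [WithZero.exp_log hne] at hx
  · rintro ⟨d, hd⟩
    obtain ⟨y, hy⟩ := LaurentSeries.valuation_surjective (K := k) (WithZero.exp d)
    have hne : Valued.v.restrict y ≠ 0 := by
      intro h0
      have := Valuation.embedding_restrict (Valued.v (R := LaurentSeries k)) y
      rw [h0, map_zero, hy] at this
      exact WithZero.exp_ne_zero this.symm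
    refine Valued.mem_nhds_zero.mpr ⟨Units.mk0 _ hne, fun x hx => hd ?_⟩
    simp only [Set.mem_setOf_eq, Units.val_mk0] at hx ⊢
    rw [Valuation.restrict_lt_iff] at hx
    rwa [← hy]

lemma tendsto_extract (hm : 1 ≤ m) (i : Fin m) :
    Tendsto (extract hm i (k := k)) (nhds 0) (nhds 0) := by
  rw [Filter.tendsto_def]
  intro s hs
  obtain ⟨d, hγ⟩ := mem_nhds_zero_exp.mp hs
  apply mem_nhds_zero_exp.mpr
  refine ⟨-((m : ℤ) * (1 - d)) + 1, ?_⟩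
  intro x hx
  simp only [Set.mem_setOf_eq, Set.mem_preimage] at hx ⊢
  apply hγ
  simp only [Set.mem_setOf_eq]
  have h1 : Valued.v x ≤ WithZero.exp (-((m : ℤ) * (1 - d))) := by
    have := le_of_lt_coe _ _ hx
    simpa using this
  have h2 := val_extract hm i x (1 - d) h1
  refine lt_of_le_of_lt h2 ?_
  rw [WithZero.exp_lt_exp]
  omega

lemma tendsto_combine (hm : 1 ≤ m) :
    Tendsto (combine hm (k := k)) (nhds 0) (nhds 0) := by
  rw [Filter.tendsto_def]
  intro s hs
  obtain ⟨d, hγ⟩ := mem_nhds_zero_exp.mp hs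
  set D : ℤ := max (1 - d) 0 with hD
  have hmem : {f : Fin m → LaurentSeries k | ∀ i, Valued.v (f i) < WithZero.exp (-D + 1)} ∈
      nhds (0 : Fin m → LaurentSeries k) := by
    have h0 : ∀ i : Fin m, ∀ᶠ f : (Fin m → LaurentSeries k) in nhds 0,
        Valued.v (f i) < WithZero.exp (-D + 1) := by
      intro i
      exact ((continuous_apply i).tendsto (0 : Fin m → LaurentSeries k)).eventually
        (mem_nhds_zero_exp.mpr ⟨-D + 1, subset_rfl⟩)
    exact eventually_all.mpr h0
  apply Filter.mem_of_superset hmem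
  intro f hf
  apply hγ
  simp only [Set.mem_setOf_eq] at hf ⊢
  have h1 : ∀ i, Valued.v (f i) ≤ WithZero.exp (-D) := by
    intro i
    have := le_of_lt_coe _ _ (hf i)
    simpa using this
  have h2 := val_combine hm f D h1
  refine lt_of_le_of_lt h2 ?_
  rw [WithZero.exp_lt_exp]
  have : (1 - d) ≤ (m : ℤ) * D := by
    have hD0 : 0 ≤ D := le_max_right _ _
    nlinarith [mul_le_mul_of_nonneg_right (show (1:ℤ) ≤ (m : ℤ) by omega) hD0,
      le_max_left (1 - d) 0]
  omega

lemma continuous_extract (hm : 1 ≤ m) (i : Fin m) :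
    Continuous (extract hm i (k := k)) := by
  apply continuous_of_continuousAt_zero (extractₗ hm i (k := k))
  rw [ContinuousAt, map_zero]
  exact tendsto_extract hm i

lemma continuous_combine (hm : 1 ≤ m) :
    Continuous (combine hm (k := k)) := by
  apply continuous_of_continuousAt_zero (combineₗ hm (k := k))
  rw [ContinuousAt, map_zero]
  exact tendsto_combine hm

/-- The interleaving continuous linear equivalence `k((t)) ≃ k((t))^m`. -/
noncomputable def interEquiv (k : Type*) [Field k] {m : ℕ} (hm : 1 ≤ m) :
    LaurentSeries k ≃L[k] (Fin m → LaurentSeries k) where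
  toLinearEquiv := LinearEquiv.ofLinear (LinearMap.pi (fun i => extractₗ hm i)) (combineₗ hm)
    (LinearMap.ext fun f => funext fun i => extract_combine hm f i)
    (LinearMap.ext fun x => combine_extract hm x)
  continuous_toFun := continuous_pi fun i => continuous_extract hm i
  continuous_invFun := continuous_combine hm

/-- The diagonal endomorphism of `k((t))^m`. -/
noncomputable def diag {k : Type*} [Field k] {m : ℕ}
    (f : Fin m → (LaurentSeries k →L[k] LaurentSeries k)) :
    (Fin m → LaurentSeries k) →L[k] (Fin m → LaurentSeries k) :=
  ContinuousLinearMap.pi fun i => (f i).comp (ContinuousLinearMap.proj i)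

@[simp] lemma diag_apply {k : Type*} [Field k] {m : ℕ}
    (f : Fin m → (LaurentSeries k →L[k] LaurentSeries k)) (x : Fin m → LaurentSeries k)
    (i : Fin m) : diag f x i = f i (x i) := rfl

/-- Conjugation of the diagonal action by the interleaving equivalence, as a linear map. -/
noncomputable def philin (k : Type*) [Field k] {m : ℕ} (hm : 1 ≤ m) :
    (Fin m → (LaurentSeries k →L[k] LaurentSeries k)) →ₗ[k]
      (LaurentSeries k →L[k] LaurentSeries k) where
  toFun f := ((interEquiv k hm).symm : (Fin m → LaurentSeries k) →L[k] LaurentSeries k).comp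
    ((diag f).comp ((interEquiv k hm) : LaurentSeries k →L[k] (Fin m → LaurentSeries k)))
  map_add' f g := by
    refine ContinuousLinearMap.ext fun x => ?_
    show (interEquiv k hm).symm (diag (f + g) ((interEquiv k hm) x)) =
      (interEquiv k hm).symm (diag f ((interEquiv k hm) x)) +
        (interEquiv k hm).symm (diag g ((interEquiv k hm) x))
    rw [← map_add]
    congr 1
  map_smul' c f := by
    refine ContinuousLinearMap.ext fun x => ?_
    show (interEquiv k hm).symm (diag (c • f) ((interEquiv k hm) x)) =
      c • (interEquiv k hm).symm (diag f ((interEquiv k hm) x))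
    rw [← map_smul]
    congr 1

@[simp] lemma philin_apply (k : Type*) [Field k] {m : ℕ} (hm : 1 ≤ m)
    (f : Fin m → (LaurentSeries k →L[k] LaurentSeries k)) (x : LaurentSeries k) :
    philin k hm f x = (interEquiv k hm).symm (diag f (interEquiv k hm x)) := rfl

/-- The embedding as an algebra homomorphism. -/
noncomputable def phi (k : Type*) [Field k] {m : ℕ} (hm : 1 ≤ m) :
    (Fin m → (LaurentSeries k →L[k] LaurentSeries k)) →ₐ[k]
      (LaurentSeries k →L[k] LaurentSeries k) :=
  AlgHom.ofLinearMap (philin k hm)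
    (by
      refine ContinuousLinearMap.ext fun x => ?_
      show (interEquiv k hm).symm (diag 1 ((interEquiv k hm) x)) = (1 : _ →L[k] _) x
      have h : diag (1 : Fin m → (LaurentSeries k →L[k] LaurentSeries k))
          ((interEquiv k hm) x) = (interEquiv k hm) x := by
        funext i; rfl
      rw [h, ContinuousLinearEquiv.symm_apply_apply]
      rfl)
    (by
      intro f g
      refine ContinuousLinearMap.ext fun x => ?_
      show (interEquiv k hm).symm (diag (f * g) ((interEquiv k hm) x)) =
        (interEquiv k hm).symm (diag f ((interEquiv k hm)
          ((interEquiv k hm).symm (diag g ((interEquiv k hm) x)))))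
      rw [ContinuousLinearEquiv.apply_symm_apply]
      congr 1)

lemma phi_injective (k : Type*) [Field k] {m : ℕ} (hm : 1 ≤ m) :
    Function.Injective (phi k hm) := by
  intro f g hfg
  funext i
  refine ContinuousLinearMap.ext fun y => ?_
  have h1 := DFunLike.congr_fun hfg ((interEquiv k hm).symm (Pi.single i y))
  simp only [phi, AlgHom.ofLinearMap_apply, philin_apply,
    ContinuousLinearEquiv.apply_symm_apply] at h1
  have h2 := (interEquiv k hm).symm.injective h1
  have h3 := congrFun h2 i
  simpa using h3

end PiEmbedAux

/-- The `m`-fold product of the `k`-algebra `E` of continuous `k`-linear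
endomorphisms of `k((t))` (with componentwise operations) embeds into `E`
as a `k`-algebra. -/
theorem pi_endomorphism_algebra_embeds (k : Type*) [Field k] (m : ℕ) (hm : 1 ≤ m) :
    ∃ φ : (Fin m → (LaurentSeries k →L[k] LaurentSeries k)) →ₐ[k]
        (LaurentSeries k →L[k] LaurentSeries k),
      Function.Injective φ := by
  exact ⟨PiEmbedAux.phi k hm, PiEmbedAux.phi_injective k hm⟩
end
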